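/- For t > 0 define g₁(t) = (1-i)/√(2πt) - (1/π) ∫_{-∞}^∞ e^{-is²t}/(1+s²) ds (the integral converging absolutely). Then g₁(t) = O(t^{-1/2}) as t → 0⁺ and g₁(t) = O(t^{-3/2}) as t → ∞; that is, there exist constants C₀, δ > 0 with |g₁(t)| ≤ C₀ t^{-1/2} for 0 < t < δ, and constants C₁, R > 0 with |g₁(t)| ≤ C₁ t^{-3/2} for t > R. -/

import Mathlib

open Complex MeasureTheory Set

/-- The Neumann boundary value `g₁(t) = qₓ(0,t)` of the linear Schrödinger solution on the
half-line with initial datum `e^{-x}` and homogeneous Dirichlet boundary condition: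
`g₁(t) = (1-i)/√(2πt) - (1/π) ∫_{-∞}^∞ e^{-is²t}/(1+s²) ds`. -/
noncomputable def neumannLS (t : ℝ) : ℂ :=
  (1 - Complex.I) / (Real.sqrt (2 * Real.pi * t) : ℂ)
    - (1 / (Real.pi : ℂ))
      * ∫ s : ℝ, Complex.exp (-Complex.I * (s : ℂ) ^ 2 * (t : ℂ)) / (1 + (s : ℂ) ^ 2)

open scoped Real

/-!
Writing `1/(1+s²) = ∫₀^∞ e^{-(1+s²)y} dy` and doing the Gaussian integral in `s` first gives
`∫ e^{-is²t}/(1+s²) ds = ∫₀^∞ e^{-y} √(π/(y+it)) dy`, while `(1-i)/√(2πt)` is the value of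
`π⁻¹√(π/(y+it))` at `y = 0`. Hence `g₁(t) = ∫₀^∞ e^{-y} (b - a_y) dy` with `b² = 1/(iπt)` and
`a_y² = 1/(π(y+it))`. All these square roots lie in the closed right half-plane, so
`|a - b| ≤ |a² - b²| / Re b`, and `Re b ~ t^{-1/2}` together with
`|1/(y+it) - 1/(it)| ≤ min (2/t) (y/t²)` gives the two bounds after integrating against `e^{-y}`.
-/

namespace NeumannLS

theorem norm_sub_le_norm_sq_sub_sq_div_re {a b : ℂ} (ha : 0 ≤ a.re) (hb : 0 < b.re) :
    ‖a - b‖ ≤ ‖a ^ 2 - b ^ 2‖ / b.re := by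
  have hsum : b.re ≤ ‖a + b‖ :=
    calc b.re ≤ (a + b).re := by rw [add_re]; linarith
      _ ≤ ‖a + b‖ := re_le_norm _
  rw [le_div_iff₀ hb, show a ^ 2 - b ^ 2 = (a + b) * (a - b) by ring, norm_mul, mul_comm]
  gcongr

theorem re_cpow_one_half_nonneg (z : ℂ) : 0 ≤ (z ^ (1 / 2 : ℂ)).re := by
  rw [one_div, cpow_inv_two_re]
  exact Real.sqrt_nonneg _

theorem cpow_one_half_sq (z : ℂ) : (z ^ (1 / 2 : ℂ)) ^ 2 = z := by
  have h := cpow_nat_inv_pow z two_ne_zero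
  norm_num at h
  exact h

theorem integral_ofReal_exp_neg_Ioi_zero : ∫ y in Ioi (0 : ℝ), (Real.exp (-y) : ℂ) = 1 := by
  rw [integral_complex_ofReal, integral_exp_neg_Ioi_zero, ofReal_one]

theorem norm_setIntegral_exp_neg_mul_le {f : ℝ → ℂ} {a b : ℝ}
    (hf : ∀ y > 0, ‖f y‖ ≤ a + b * y) :
    ‖∫ y in Ioi (0 : ℝ), Real.exp (-y) * f y‖ ≤ a + b := by
  have hexp : IntegrableOn (fun y : ℝ => Real.exp (-y)) (Ioi 0) := by
    simpa using exp_neg_integrableOn_Ioi 0 one_pos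
  have hmoment : IntegrableOn (fun y : ℝ => Real.exp (-y) * y) (Ioi 0) := by
    simpa [show (2 : ℝ) - 1 = 1 by norm_num] using Real.GammaIntegral_convergent two_pos
  have hmoment_eq : ∫ y in Ioi (0 : ℝ), Real.exp (-y) * y = 1 := by
    simpa [show (2 : ℝ) - 1 = 1 by norm_num] using (Real.Gamma_eq_integral two_pos).symm
  have hbound : ∀ᵐ y ∂(volume.restrict (Ioi (0 : ℝ))),
      ‖(Real.exp (-y) : ℂ) * f y‖ ≤ a * Real.exp (-y) + b * (Real.exp (-y) * y) := by
    filter_upwards [self_mem_ae_restrict measurableSet_Ioi] with y hy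
    rw [norm_mul, norm_real, Real.norm_eq_abs, Real.abs_exp]
    nlinarith [hf y hy, Real.exp_pos (-y)]
  have hg : Integrable (fun y => a * Real.exp (-y) + b * (Real.exp (-y) * y))
      (volume.restrict (Ioi 0)) := (hexp.const_mul a).add (hmoment.const_mul b)
  refine (norm_integral_le_of_norm_le hg hbound).trans ?_
  rw [integral_add (hexp.const_mul a) (hmoment.const_mul b), integral_const_mul,
    integral_const_mul, integral_exp_neg_Ioi_zero, hmoment_eq, mul_one, mul_one]

noncomputable def gaussLaplaceKernel (c : ℂ) (s y : ℝ) : ℂ :=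
  cexp (-(y + c) * s ^ 2) * Real.exp (-y)

section GaussLaplace

variable {c : ℂ}

theorem norm_gaussLaplaceKernel_le (hc : 0 ≤ c.re) (s y : ℝ) :
    ‖gaussLaplaceKernel c s y‖ ≤ Real.exp (-(1 + s ^ 2) * y) := by
  rw [gaussLaplaceKernel, norm_mul, norm_exp, norm_real, Real.norm_eq_abs, Real.abs_exp,
    ← Real.exp_add]
  gcongr
  have hre : (-((y : ℂ) + c) * (s : ℂ) ^ 2).re = -(y + c.re) * s ^ 2 := by
    simp [← ofReal_pow]
  rw [hre]
  nlinarith [sq_nonneg s]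

theorem integral_exp_neg_one_add_sq_mul (s : ℝ) :
    ∫ y in Ioi (0 : ℝ), Real.exp (-(1 + s ^ 2) * y) = (1 + s ^ 2)⁻¹ := by
  rw [integral_exp_mul_Ioi (by nlinarith [sq_nonneg s]), mul_zero, Real.exp_zero, neg_div,
    div_neg, neg_neg, one_div]

theorem integrable_gaussLaplaceKernel (hc : 0 ≤ c.re) :
    Integrable (Function.uncurry (gaussLaplaceKernel c))
      (volume.prod (volume.restrict (Ioi 0))) := by
  have hG : Integrable (fun p : ℝ × ℝ => Real.exp (-(1 + p.1 ^ 2) * p.2))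
      (volume.prod (volume.restrict (Ioi 0))) := by
    refine (integrable_prod_iff (by fun_prop)).2
      ⟨.of_forall fun s => exp_neg_integrableOn_Ioi 0 (b := 1 + s ^ 2) (by positivity), ?_⟩
    simp only [Real.norm_eq_abs, Real.abs_exp]
    simp_rw [integral_exp_neg_one_add_sq_mul]
    exact integrable_inv_one_add_sq
  refine hG.mono' ?_ (.of_forall fun p => norm_gaussLaplaceKernel_le hc p.1 p.2)
  unfold gaussLaplaceKernel
  fun_prop

theorem integral_gaussLaplaceKernel_left (s : ℝ) :
    ∫ y in Ioi (0 : ℝ), gaussLaplaceKernel c s y = cexp (-c * s ^ 2) / (1 + s ^ 2) := by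
  have hsplit : ∀ y : ℝ, gaussLaplaceKernel c s y
      = cexp (-c * s ^ 2) * cexp (-(1 + (s : ℂ) ^ 2) * y) := by
    intro y
    rw [gaussLaplaceKernel, ofReal_exp, ← Complex.exp_add, ← Complex.exp_add]
    push_cast
    ring_nf
  have hre : (-(1 + (s : ℂ) ^ 2)).re < 0 := by
    simp only [← ofReal_pow, neg_re, add_re, one_re, ofReal_re]
    nlinarith [sq_nonneg s]
  simp_rw [hsplit]
  rw [integral_const_mul, integral_exp_mul_complex_Ioi hre, ofReal_zero, mul_zero,
    Complex.exp_zero, neg_div, div_neg, neg_neg, mul_one_div]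

theorem integral_gaussLaplaceKernel_right (hc : 0 ≤ c.re) {y : ℝ} (hy : 0 < y) :
    ∫ s : ℝ, gaussLaplaceKernel c s y = Real.exp (-y) * (π / (y + c)) ^ (1 / 2 : ℂ) := by
  have hre : 0 < ((y : ℂ) + c).re := by
    rw [add_re, ofReal_re]
    linarith
  simp only [gaussLaplaceKernel]
  rw [integral_mul_const, integral_gaussian_complex hre, mul_comm]

theorem integral_cexp_neg_mul_sq_div_one_add_sq (hc : 0 ≤ c.re) :
    ∫ s : ℝ, cexp (-c * s ^ 2) / (1 + s ^ 2)
      = ∫ y in Ioi (0 : ℝ), Real.exp (-y) * (π / (y + c)) ^ (1 / 2 : ℂ) :=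
  calc ∫ s : ℝ, cexp (-c * s ^ 2) / (1 + s ^ 2)
      = ∫ s : ℝ, ∫ y in Ioi (0 : ℝ), gaussLaplaceKernel c s y := by
        simp_rw [integral_gaussLaplaceKernel_left]
    _ = ∫ y in Ioi (0 : ℝ), ∫ s : ℝ, gaussLaplaceKernel c s y :=
        integral_integral_swap (integrable_gaussLaplaceKernel hc)
    _ = ∫ y in Ioi (0 : ℝ), Real.exp (-y) * (π / (y + c)) ^ (1 / 2 : ℂ) :=
        setIntegral_congr_fun measurableSet_Ioi fun _ hy =>
          integral_gaussLaplaceKernel_right hc hy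

theorem integrableOn_exp_neg_mul_cpow_one_half (hc : 0 ≤ c.re) :
    IntegrableOn (fun y : ℝ => Real.exp (-y) * (π / (y + c)) ^ (1 / 2 : ℂ)) (Ioi 0) := by
  refine (integrable_gaussLaplaceKernel hc).integral_prod_right.congr ?_
  filter_upwards [self_mem_ae_restrict measurableSet_Ioi] with y hy
  exact integral_gaussLaplaceKernel_right hc hy

end GaussLaplace

theorem neumannLS_eq_integral (t : ℝ) :
    neumannLS t = ∫ y in Ioi (0 : ℝ), Real.exp (-y)
      * ((1 - I) / √(2 * π * t) - (π : ℂ)⁻¹ * (π / (y + I * t)) ^ (1 / 2 : ℂ)) := by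
  have hc : 0 ≤ (I * t).re := by simp
  have hexp : Integrable (fun y : ℝ => (Real.exp (-y) : ℂ)) (volume.restrict (Ioi 0)) := by
    have h := (exp_neg_integrableOn_Ioi 0 one_pos).ofReal (𝕜 := ℂ)
    simp only [neg_mul, one_mul] at h
    exact h
  simp_rw [mul_sub, mul_left_comm _ ((π : ℂ)⁻¹)]
  rw [integral_sub (hexp.mul_const _) ((integrableOn_exp_neg_mul_cpow_one_half hc).const_mul _),
    integral_mul_const, integral_ofReal_exp_neg_Ioi_zero, one_mul, integral_const_mul,
    ← integral_cexp_neg_mul_sq_div_one_add_sq hc, neumannLS, one_div]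
  simp_rw [neg_mul, mul_right_comm I]

theorem le_norm_ofReal_add_I_mul (y t : ℝ) : t ≤ ‖(y : ℂ) + I * t‖ :=
  calc t ≤ |((y : ℂ) + I * t).im| := by simpa using le_abs_self t
    _ ≤ ‖(y : ℂ) + I * t‖ := abs_im_le_norm _

theorem norm_inv_sub_inv_le_two_div {t : ℝ} (ht : 0 < t) (y : ℝ) :
    ‖((y : ℂ) + I * t)⁻¹ - (I * t)⁻¹‖ ≤ 2 / t := by
  have h₁ : ‖((y : ℂ) + I * t)⁻¹‖ ≤ 1 / t := by
    rw [norm_inv, ← one_div]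
    exact one_div_le_one_div_of_le ht (le_norm_ofReal_add_I_mul y t)
  have h₂ : ‖(I * t)⁻¹‖ = 1 / t := by simp [abs_of_pos ht]
  calc _ ≤ ‖((y : ℂ) + I * t)⁻¹‖ + ‖(I * t)⁻¹‖ := norm_sub_le _ _
    _ ≤ 1 / t + 1 / t := add_le_add h₁ h₂.le
    _ = 2 / t := by ring

theorem norm_inv_sub_inv_le_abs_div_sq {t : ℝ} (ht : 0 < t) (y : ℝ) :
    ‖((y : ℂ) + I * t)⁻¹ - (I * t)⁻¹‖ ≤ |y| / t ^ 2 := by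
  have hz := le_norm_ofReal_add_I_mul y t
  have hz₀ : (y : ℂ) + I * t ≠ 0 := norm_pos_iff.1 (ht.trans_le hz)
  have hw₀ : I * (t : ℂ) ≠ 0 := mul_ne_zero I_ne_zero (ofReal_ne_zero.2 ht.ne')
  rw [inv_sub_inv hz₀ hw₀, show I * (t : ℂ) - (y + I * t) = -y by ring, norm_div, norm_neg,
    norm_mul, norm_mul]
  simp only [norm_real, Real.norm_eq_abs, norm_I, one_mul, abs_of_pos ht]
  gcongr
  nlinarith

theorem sqrt_two_pi_mul_le (t : ℝ) : √(2 * π * t) ≤ π * √t := by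
  rw [Real.sqrt_mul (by positivity)]
  gcongr
  rw [Real.sqrt_le_left Real.pi_pos.le]
  nlinarith [Real.pi_gt_three]

theorem norm_sub_le_sqrt_mul_norm_inv_sub_inv {t : ℝ} (ht : 0 < t) (y : ℝ) :
    ‖(1 - I) / √(2 * π * t) - (π : ℂ)⁻¹ * (π / (y + I * t)) ^ (1 / 2 : ℂ)‖
      ≤ √t * ‖((y : ℂ) + I * t)⁻¹ - (I * t)⁻¹‖ := by
  have ha : 0 ≤ ((π : ℂ)⁻¹ * (π / (y + I * t)) ^ (1 / 2 : ℂ)).re := by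
    rw [show (π : ℂ)⁻¹ = ((π⁻¹ : ℝ) : ℂ) by push_cast; rfl, re_ofReal_mul]
    exact mul_nonneg (by positivity) (re_cpow_one_half_nonneg _)
  set a := (π : ℂ)⁻¹ * (π / (y + I * t)) ^ (1 / 2 : ℂ)
  set b := (1 - I) / (√(2 * π * t) : ℂ)
  have hs : 0 < √(2 * π * t) := by positivity
  have hb : b.re = (√(2 * π * t))⁻¹ := by simp [b, div_ofReal_re]
  have hsq : a ^ 2 - b ^ 2 = (π : ℂ)⁻¹ * (((y : ℂ) + I * t)⁻¹ - (I * t)⁻¹) := by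
    have hπ : (π : ℂ) ≠ 0 := ofReal_ne_zero.2 Real.pi_ne_zero
    have ht' : (t : ℂ) ≠ 0 := ofReal_ne_zero.2 ht.ne'
    have hz : (y : ℂ) + I * t ≠ 0 := norm_pos_iff.1 (ht.trans_le (le_norm_ofReal_add_I_mul y t))
    have hs2 : ((√(2 * π * t) : ℝ) : ℂ) ^ 2 = 2 * π * t := by
      rw [← ofReal_pow, Real.sq_sqrt (by positivity)]
      push_cast
      ring
    simp only [a, b, mul_pow, div_pow, cpow_one_half_sq, hs2]
    field_simp
    linear_combination (2 - I) * ((y : ℂ) + I * t) * I_sq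
  calc ‖b - a‖ = ‖a - b‖ := norm_sub_rev _ _
    _ ≤ ‖a ^ 2 - b ^ 2‖ / b.re :=
        norm_sub_le_norm_sq_sub_sq_div_re ha (hb ▸ inv_pos.2 hs)
    _ = √(2 * π * t) / π * ‖((y : ℂ) + I * t)⁻¹ - (I * t)⁻¹‖ := by
        rw [hsq, hb, norm_mul, norm_inv, norm_real, Real.norm_eq_abs, abs_of_pos Real.pi_pos]
        field_simp
    _ ≤ √t * ‖((y : ℂ) + I * t)⁻¹ - (I * t)⁻¹‖ := by
        gcongr
        rw [div_le_iff₀' Real.pi_pos]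
        exact sqrt_two_pi_mul_le t

theorem norm_neumannLS_le {t a b : ℝ} (ht : 0 < t)
    (h : ∀ y : ℝ, 0 < y → √t * ‖((y : ℂ) + I * t)⁻¹ - (I * t)⁻¹‖ ≤ a + b * y) :
    ‖neumannLS t‖ ≤ a + b := by
  rw [neumannLS_eq_integral]
  exact norm_setIntegral_exp_neg_mul_le fun y hy =>
    (norm_sub_le_sqrt_mul_norm_inv_sub_inv ht y).trans (h y hy)

theorem sqrt_div_pow_eq_rpow {t : ℝ} (ht : 0 < t) (n : ℕ) :
    √t / t ^ n = t ^ ((1 : ℝ) / 2 - n) := by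
  rw [Real.sqrt_eq_rpow, Real.rpow_sub ht, Real.rpow_natCast]

end NeumannLS

open NeumannLS

/-- `g₁(t) = O(t^{-1/2})` as `t → 0⁺` and `g₁(t) = O(t^{-3/2})` as `t → ∞`. -/
theorem neumannLS_asymptotics :
    (∃ C₀ > (0 : ℝ), ∃ δ > (0 : ℝ), ∀ t : ℝ, 0 < t → t < δ →
      ‖neumannLS t‖ ≤ C₀ * t ^ (-(1 : ℝ) / 2)) ∧
    (∃ C₁ > (0 : ℝ), ∃ R > (0 : ℝ), ∀ t : ℝ, R < t →
      ‖neumannLS t‖ ≤ C₁ * t ^ (-(3 : ℝ) / 2)) := by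
  constructor
  · refine ⟨2, two_pos, 1, one_pos, fun t ht _ => ?_⟩
    calc ‖neumannLS t‖ ≤ 2 * (√t / t ^ 1) + 0 :=
          norm_neumannLS_le ht fun y _ => by
            grw [norm_inv_sub_inv_le_two_div ht y]
            exact le_of_eq (by ring)
      _ = 2 * t ^ (-(1 : ℝ) / 2) := by
          rw [add_zero, sqrt_div_pow_eq_rpow ht]
          norm_num
  · refine ⟨1, one_pos, 1, one_pos, fun t ht => ?_⟩
    have ht₀ : 0 < t := one_pos.trans ht
    calc ‖neumannLS t‖ ≤ 0 + √t / t ^ 2 :=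
          norm_neumannLS_le ht₀ fun y hy => by
            grw [norm_inv_sub_inv_le_abs_div_sq ht₀ y, abs_of_pos hy]
            exact le_of_eq (by ring)
      _ = 1 * t ^ (-(3 : ℝ) / 2) := by
          rw [zero_add, one_mul, sqrt_div_pow_eq_rpow ht₀]
          norm_num
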